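/- arXiv:2401.03192 — 5 statements merged into one kernel-verified Lean document; each statement's English description precedes it below -/
import Mathlib

section
/- Let H be a complex Hilbert space, L : H → H a bounded self-adjoint operator, and (P_n) a sequence of orthogonal projections P_n : H → V_n onto closed subspaces V_n ⊆ H such that P_n* P_n converges strongly to the identity. Then for every continuous function f : ℝ → ℂ, the operators P_n* f(P_n L P_n*) P_n converge strongly to f(L) as n → ∞, where f(·) denotes the continuous functional calculus applied to the bounded self-adjoint operators P_n L P_n* and L. In other words, the projection-valued spectral measures of P_n L P_n* (pushed forward to H via P_n*) converge weakly, in the strong operator topology, to the projection-valued spectral measure of L. -/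
/-!
For a polynomial `r`, `Pₙ* r(Pₙ L Pₙ*) Pₙ = r(Qₙ L) Qₙ` with `Qₙ = Pₙ* Pₙ`, because `Pₙ Pₙ* = 1`;
since the `Qₙ` are contractions converging strongly to `1`, this converges strongly to `r(L)`.
A continuous `f` is approximated uniformly on `[-‖L‖, ‖L‖]` by polynomials (Weierstrass). All
the compressions have norm at most `‖L‖`, so their spectra lie in this interval, and the
functional calculus turns the uniform approximation into one in operator norm, uniformly in `n`.
-/

open MeasureTheory Filter

/-- The continuous functional calculus instance for bounded operators on a Hilbert space,
made available for operators on (complete) subspaces as well. -/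
noncomputable local instance cfcCLM {E : Type*} [NormedAddCommGroup E] [InnerProductSpace ℂ E]
    [CompleteSpace E] : ContinuousFunctionalCalculus ℂ (E →L[ℂ] E) IsStarNormal :=
  inferInstance

/-- The compression `P L P*` of a bounded operator `L` to a closed subspace `V`,
where `P` is the orthogonal projection of `H` onto `V` and `P*` its adjoint
(the inclusion of `V` into `H`). -/
noncomputable def compressOp {H : Type*} [NormedAddCommGroup H] [InnerProductSpace ℂ H]
    (L : H →L[ℂ] H) (V : Submodule ℂ H) [Submodule.HasOrthogonalProjection V] : V →L[ℂ] V :=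
  (V.orthogonalProjectionOnto).comp (L.comp V.subtypeL)

/-- For a bounded self-adjoint operator `A` and `f : ℝ → ℂ` continuous, `f(A)` is obtained
from the continuous functional calculus; since the spectrum of `A` is real, this is the
(complex) continuous functional calculus applied to `z ↦ f (Re z)`. -/
noncomputable def cfcSelfAdjoint {E : Type*} [NormedAddCommGroup E] [InnerProductSpace ℂ E]
    [CompleteSpace E] (f : ℝ → ℂ) (A : E →L[ℂ] E) : E →L[ℂ] E :=
  cfc (fun z : ℂ => f z.re) A

open Polynomial Topology Set

theorem tendsto_of_forall_approx {ι α : Type*} [PseudoMetricSpace α] {l : Filter ι}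
    {x : ι → α} {a : α}
    (h : ∀ ε > 0, ∃ (y : ι → α) (b : α), Tendsto y l (𝓝 b) ∧ (∀ i, dist (x i) (y i) ≤ ε) ∧
      dist a b ≤ ε) :
    Tendsto x l (𝓝 a) := by
  refine Metric.tendsto_nhds.2 fun ε hε => ?_
  obtain ⟨y, b, hyb, hxy, hab⟩ := h (ε / 3) (by positivity)
  filter_upwards [Metric.tendsto_nhds.1 hyb (ε / 3) (by positivity)] with i hi
  calc dist (x i) a ≤ dist (x i) (y i) + dist (y i) b + dist b a := dist_triangle4 _ _ _ _
    _ < ε := by linarith [hxy i, dist_comm a b]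

theorem exists_complex_polynomial_near_of_continuousOn (a b : ℝ) (f : ℝ → ℂ)
    (hf : ContinuousOn f (Icc a b)) (ε : ℝ) (pos : 0 < ε) :
    ∃ r : ℂ[X], ∀ x ∈ Icc a b, ‖r.eval (x : ℂ) - f x‖ < ε := by
  obtain ⟨p, hp⟩ := exists_polynomial_near_of_continuousOn a b (fun x => (f x).re)
    (Complex.continuous_re.comp_continuousOn hf) (ε / 2) (by positivity)
  obtain ⟨q, hq⟩ := exists_polynomial_near_of_continuousOn a b (fun x => (f x).im)
    (Complex.continuous_im.comp_continuousOn hf) (ε / 2) (by positivity)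
  refine ⟨p.map Complex.ofRealHom + C Complex.I * q.map Complex.ofRealHom, fun x hx => ?_⟩
  have heval : ∀ s : ℝ[X], (s.map Complex.ofRealHom).eval (x : ℂ) = s.eval x := fun s => by
    rw [eval_map]; exact eval₂_at_apply Complex.ofRealHom x
  calc _ ≤ |p.eval x - (f x).re| + |q.eval x - (f x).im| := by
        simpa [heval] using Complex.norm_le_abs_re_add_abs_im
          ((p.map Complex.ofRealHom + C Complex.I * q.map Complex.ofRealHom).eval (x : ℂ) - f x)
    _ < ε := by linarith [hp x hx, hq x hx]

theorem tendsto_apply_of_tendsto_of_norm_le {ι 𝕜 E F : Type*} [NontriviallyNormedField 𝕜]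
    [SeminormedAddCommGroup E] [NormedSpace 𝕜 E] [SeminormedAddCommGroup F] [NormedSpace 𝕜 F]
    {l : Filter ι} {T : ι → E →L[𝕜] F} {T₀ : E →L[𝕜] F} {C : ℝ} (hC : ∀ i, ‖T i‖ ≤ C)
    (hT : ∀ x, Tendsto (fun i => T i x) l (𝓝 (T₀ x))) {x : ι → E} {x₀ : E}
    (hx : Tendsto x l (𝓝 x₀)) :
    Tendsto (fun i => T i (x i)) l (𝓝 (T₀ x₀)) := by
  have hsmall : Tendsto (fun i => T i (x i - x₀)) l (𝓝 0) := by
    refine squeeze_zero_norm (fun i => ((T i).le_opNorm _).trans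
      (mul_le_mul_of_nonneg_right (hC i) (norm_nonneg _))) ?_
    simpa using (tendsto_iff_norm_sub_tendsto_zero.1 hx).const_mul C
  simpa using hsmall.add (hT x₀)

section Compression

variable {H : Type*} [NormedAddCommGroup H] [InnerProductSpace ℂ H]

theorem isSelfAdjoint_compressOp [CompleteSpace H] {L : H →L[ℂ] H} (hL : IsSelfAdjoint L)
    (V : Submodule ℂ H) [CompleteSpace V] : IsSelfAdjoint (compressOp L V) := by
  rw [IsSelfAdjoint, ContinuousLinearMap.star_eq_adjoint, compressOp,
    ContinuousLinearMap.adjoint_comp, ContinuousLinearMap.adjoint_comp,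
    V.adjoint_orthogonalProjectionOnto, V.adjoint_subtypeL, hL.adjoint_eq,
    ContinuousLinearMap.comp_assoc]

theorem norm_compressOp_le (L : H →L[ℂ] H) (V : Submodule ℂ H) [V.HasOrthogonalProjection] :
    ‖compressOp L V‖ ≤ ‖L‖ :=
  calc ‖compressOp L V‖ ≤ ‖V.orthogonalProjectionOnto‖ * (‖L‖ * ‖V.subtypeL‖) :=
        (ContinuousLinearMap.opNorm_comp_le _ _).trans (by gcongr; exact L.opNorm_comp_le _)
    _ ≤ 1 * (‖L‖ * 1) := by
        gcongr
        exacts [V.orthogonalProjectionOnto_norm_le, V.norm_subtypeL_le]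
    _ = ‖L‖ := by ring

theorem coe_compressOp_pow_apply (L : H →L[ℂ] H) (V : Submodule ℂ H) [V.HasOrthogonalProjection]
    (k : ℕ) (u : V) : ((compressOp L V ^ k) u : H) = ((V.starProjection ∘L L) ^ k) u := by
  induction k with
  | zero => rfl
  | succ k ih =>
    rw [pow_succ', pow_succ', mul_apply_eq_comp, mul_apply_eq_comp, ← ih]
    rfl

variable {V : ℕ → Submodule ℂ H} [∀ n, (V n).HasOrthogonalProjection]

theorem tendsto_starProjection_comp_pow_apply
    (hP : ∀ u, Tendsto (fun n => (V n).starProjection u) atTop (𝓝 u)) (L : H →L[ℂ] H) (k : ℕ)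
    (v : H) :
    Tendsto (fun n => (((V n).starProjection ∘L L) ^ k) ((V n).starProjection v)) atTop
      (𝓝 ((L ^ k) v)) := by
  induction k with
  | zero => simpa using hP v
  | succ k ih =>
    simp only [pow_succ', mul_apply_eq_comp, ContinuousLinearMap.comp_apply]
    exact tendsto_apply_of_tendsto_of_norm_le (T₀ := .id ℂ H)
      (fun n => (V n).starProjection_norm_le) hP ((L.continuous.tendsto _).comp ih)

theorem tendsto_aeval_compressOp_apply
    (hP : ∀ u, Tendsto (fun n => (V n).starProjection u) atTop (𝓝 u)) (L : H →L[ℂ] H) (r : ℂ[X])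
    (v : H) :
    Tendsto (fun n => (aeval (compressOp L (V n)) r ((V n).orthogonalProjectionOnto v) : H))
      atTop (𝓝 (aeval L r v)) := by
  induction r using Polynomial.induction_on' with
  | add p q hp hq =>
    simpa only [map_add, add_apply, Submodule.coe_add] using hp.add hq
  | monomial k c =>
    simp only [aeval_monomial, ← Algebra.smul_def, smul_apply,
      Submodule.coe_smul, coe_compressOp_pow_apply]
    exact (tendsto_starProjection_comp_pow_apply hP L k v).const_smul c

end Compression

section FunctionalCalculus

variable {E : Type*} [NormedAddCommGroup E] [InnerProductSpace ℂ E] [CompleteSpace E]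

theorem cfcSelfAdjoint_eval_polynomial {A : E →L[ℂ] E} (hA : IsSelfAdjoint A) (r : ℂ[X]) :
    cfcSelfAdjoint (fun x : ℝ => r.eval (x : ℂ)) A = aeval A r := by
  rw [cfcSelfAdjoint, ← cfc_polynomial r A]
  exact cfc_congr fun z hz => congrArg (eval · r) (hA.mem_spectrum_eq_re hz).symm

theorem norm_cfcSelfAdjoint_sub_apply_le {f g : ℝ → ℂ} (hf : Continuous f) (hg : Continuous g)
    {A : E →L[ℂ] E} {M c : ℝ} (hAM : ‖A‖ ≤ M) (hc : 0 ≤ c)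
    (hfg : ∀ x ∈ Icc (-M) M, ‖f x - g x‖ ≤ c) (u : E) :
    ‖cfcSelfAdjoint f A u - cfcSelfAdjoint g A u‖ ≤ c * ‖u‖ := by
  have hop : ‖cfcSelfAdjoint f A - cfcSelfAdjoint g A‖ ≤ c := by
    rw [cfcSelfAdjoint, cfcSelfAdjoint, ← cfc_sub (fun z : ℂ => f z.re) (fun z : ℂ => g z.re) A]
    refine norm_cfc_le hc fun z hz => hfg z.re (abs_le.1 ?_)
    calc |z.re| ≤ ‖z‖ := Complex.abs_re_le_norm z
      _ ≤ ‖A‖ * ‖(1 : E →L[ℂ] E)‖ := spectrum.norm_le_norm_mul_of_mem hz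
      _ ≤ ‖A‖ := mul_le_of_le_one_right (norm_nonneg A) ContinuousLinearMap.norm_id_le
      _ ≤ M := hAM
  simpa only [sub_apply] using ((cfcSelfAdjoint f A - cfcSelfAdjoint g A).le_opNorm u).trans
    (mul_le_mul_of_nonneg_right hop (norm_nonneg u))

end FunctionalCalculus

theorem hermitianDMD_stmt2 {H : Type*} [NormedAddCommGroup H] [InnerProductSpace ℂ H]
    [CompleteSpace H]
    (L : H →L[ℂ] H) (hL : IsSelfAdjoint L)
    (V : ℕ → Submodule ℂ H) [∀ n, CompleteSpace (V n)]
    -- `Pₙ* Pₙ` converges strongly to the identity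
    (hP : ∀ u : H, Tendsto (fun n => (((V n).orthogonalProjectionOnto u : V n) : H)) atTop (nhds u))
    (f : ℝ → ℂ) (hf : Continuous f) (v : H) :
    Tendsto
      (fun n => (V n).subtypeL
        (cfcSelfAdjoint f (compressOp L (V n)) ((V n).orthogonalProjectionOnto v)))
      atTop (nhds (cfcSelfAdjoint f L v)) := by
  refine tendsto_of_forall_approx fun ε hε => ?_
  set δ := ε / (‖v‖ + 1)
  have hδv : δ * ‖v‖ ≤ ε := by
    rw [div_mul_eq_mul_div, div_le_iff₀ (by positivity)]
    nlinarith [norm_nonneg v]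
  obtain ⟨r, hr⟩ := exists_complex_polynomial_near_of_continuousOn (-‖L‖) ‖L‖ f hf.continuousOn δ
    (by positivity)
  have hfr x (hx : x ∈ Icc (-‖L‖) ‖L‖) : ‖f x - r.eval (x : ℂ)‖ ≤ δ := by
    rw [norm_sub_rev]; exact (hr x hx).le
  have hr_cont : Continuous fun x : ℝ => r.eval (x : ℂ) := by fun_prop
  refine ⟨_, _, tendsto_aeval_compressOp_apply hP L r v, fun n => ?_, ?_⟩
  · rw [dist_eq_norm, ← cfcSelfAdjoint_eval_polynomial (isSelfAdjoint_compressOp hL (V n))]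
    calc _ ≤ δ * ‖(V n).orthogonalProjectionOnto v‖ :=
          norm_cfcSelfAdjoint_sub_apply_le hf hr_cont (norm_compressOp_le L (V n)) (by positivity)
            hfr _
      _ ≤ δ * ‖v‖ := by gcongr; exact (V n).norm_orthogonalProjectionOnto_apply_le v
      _ ≤ ε := hδv
  · rw [dist_eq_norm, ← cfcSelfAdjoint_eval_polynomial hL]
    exact (norm_cfcSelfAdjoint_sub_apply_le hf hr_cont le_rfl (by positivity) hfr v).trans hδv
end

section
/- Let L be a (possibly unbounded) self-adjoint operator on a complex Hilbert space H with dense domain D(L), and let (P_n) be a sequence of orthogonal projections P_n : H → V_n onto closed subspaces V_n ⊆ D(L), each of whose compressions P_n L P_n* is a self-adjoint operator on V_n (automatic when V_n is finite-dimensional), such that P_n* P_n converges strongly to the identity. Suppose there exists a core S ⊆ D(L) for L such that lim_{n→∞} L P_n* P_n u = L u and lim_{n→∞} P_n* P_n u = u for every u ∈ S. Then for every z ∈ ℂ \ ℝ and every v ∈ H, lim_{n→∞} P_n* [P_n (L − zI) P_n*]^{−1} P_n v = (L − zI)^{−1} v in the norm of H. -/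
/-!
Because the compressions `Pₙ T Pₙ*` are self-adjoint, the Galerkin resolvents
`Pₙ* (Pₙ (T - z) Pₙ*)⁻¹ Pₙ` are bounded by `1 / |Im z|` uniformly in `n`. Strong convergence to
the continuous limit `(T - z)⁻¹` therefore only has to be checked on a dense set, and
`(T - z) S` is dense because `S` is a core and `T - z` is onto. For `s ∈ S` the Galerkin
resolvent sends `(T - z) Pₙ s` exactly to `Pₙ s → s`, while `(T - z) Pₙ s → (T - z) s` by
hypothesis; uniform boundedness lets us replace the former by the latter.
-/

open Filter
open scoped InnerProductSpace NNReal Topology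

section UniformlyBounded

variable {𝕜 E G ι : Type*} [NontriviallyNormedField 𝕜] [NormedAddCommGroup E] [NormedSpace 𝕜 E]
  [NormedAddCommGroup G] [NormedSpace 𝕜 G] {F : ι → E →L[𝕜] G} {C : ℝ} {l : Filter ι}

lemma tendsto_apply_of_tendsto_apply_seq (hF : ∀ i x, ‖F i x‖ ≤ C * ‖x‖) {x : ι → E} {a : E}
    {b : G} (hx : Tendsto x l (𝓝 a)) (hFx : Tendsto (fun i => F i (x i)) l (𝓝 b)) :
    Tendsto (fun i => F i a) l (𝓝 b) := by
  have hsmall : Tendsto (fun i => F i (a - x i)) l (𝓝 0) := by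
    refine squeeze_zero_norm (fun i => hF i _) ?_
    simpa using ((tendsto_const_nhds (x := a)).sub hx).norm.const_mul C
  simpa using hFx.add hsmall

lemma tendsto_apply_of_dense (hF : ∀ i x, ‖F i x‖ ≤ C * ‖x‖) {g : E → G} (hg : Continuous g)
    {D : Set E} (hD : Dense D) (hconv : ∀ x ∈ D, Tendsto (fun i => F i x) l (𝓝 (g x))) (x : E) :
    Tendsto (fun i => F i x) l (𝓝 (g x)) := by
  have hequi : Equicontinuous ((↑) ∘ F) := ((NormedSpace.equicontinuous_TFAE F).out 3 1).mp
    (⟨C, hF⟩ : ∃ C, ∀ i x, ‖F i x‖ ≤ C * ‖x‖)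
  have hclosed := hequi.isClosed_setOfPred_tendsto (l := l) hg
  exact closure_minimal hconv hclosed (hD.closure_eq ▸ Set.mem_univ x)

end UniformlyBounded

namespace IsSelfAdjoint

variable {K : Type*} [NormedAddCommGroup K] [InnerProductSpace ℂ K] [CompleteSpace K]
  {A : K →L[ℂ] K}

lemma le_norm_inner_sub_smul_one_apply (hA : IsSelfAdjoint A) (z : ℂ) (x : K) :
    ‖x‖ ^ 2 * ‖z.im‖₊ ≤ ‖⟪(A - z • 1) x, x⟫_ℂ‖ := by
  have hreal : (⟪A x, x⟫_ℂ).im = 0 := hA.isSymmetric.im_inner_apply_self x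
  have him : (⟪(A - z • 1) x, x⟫_ℂ).im = z.im * ‖x‖ ^ 2 := by
    simp [inner_self_eq_norm_sq_to_K, ← Complex.ofReal_pow, hreal, mul_comm]
  calc ‖x‖ ^ 2 * ‖z.im‖₊ = |(⟪(A - z • 1) x, x⟫_ℂ).im| := by
        rw [him, abs_mul, abs_of_nonneg (by positivity : (0:ℝ) ≤ ‖x‖ ^ 2), mul_comm, coe_nnnorm,
          Real.norm_eq_abs]
    _ ≤ _ := Complex.abs_im_le_norm _

variable {z : ℂ}

lemma isUnit_sub_smul_one (hA : IsSelfAdjoint A) (hz : z.im ≠ 0) : IsUnit (A - z • 1) :=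
  ContinuousLinearMap.isUnit_of_forall_le_norm_inner_map _ (nnnorm_pos.mpr hz)
    (hA.le_norm_inner_sub_smul_one_apply z)

lemma norm_inverse_sub_smul_one_apply_le (hA : IsSelfAdjoint A) (hz : z.im ≠ 0) (y : K) :
    ‖Ring.inverse (A - z • 1) y‖ ≤ |z.im|⁻¹ * ‖y‖ := by
  have hanti := ContinuousLinearMap.antilipschitz_of_forall_le_inner_map _ (nnnorm_pos.mpr hz)
    (hA.le_norm_inner_sub_smul_one_apply z)
  have hbound := (A - z • 1).bound_of_antilipschitz hanti (Ring.inverse (A - z • 1) y)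
  rwa [← mul_apply_eq_comp, Ring.mul_inverse_cancel _ (hA.isUnit_sub_smul_one hz),
    one_apply_eq_self, NNReal.coe_inv, coe_nnnorm, Real.norm_eq_abs] at hbound

end IsSelfAdjoint

namespace LinearPMap

variable {𝕜 E : Type*} [NormedField 𝕜] [NormedAddCommGroup E] [NormedSpace 𝕜 E]

lemma mem_closure_range_sub_smul_of_core (T : E →ₗ.[𝕜] E) {S : Submodule 𝕜 E}
    (hS : S ≤ T.domain) (hcore : ∀ (x : T.domain) (ε : ℝ), 0 < ε →
      ∃ s, ∃ hs : s ∈ S, ‖s - (x : E)‖ < ε ∧ ‖T ⟨s, hS hs⟩ - T x‖ < ε)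
    (c : 𝕜) (x : T.domain) :
    T x - c • (x : E) ∈ _root_.closure (Set.range fun s : S => T ⟨s, hS s.2⟩ - c • (s : E)) := by
  rw [Metric.mem_closure_iff]
  intro ε hε
  obtain ⟨s, hs, hsx, hTsx⟩ := hcore x (ε / (1 + ‖c‖)) (by positivity)
  refine ⟨_, ⟨⟨s, hs⟩, rfl⟩, ?_⟩
  calc dist (T x - c • (x : E)) (T ⟨s, hS hs⟩ - c • s)
      = ‖(T ⟨s, hS hs⟩ - T x) - c • (s - (x : E))‖ := by
        rw [dist_comm, dist_eq_norm, smul_sub]; abel_nf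
    _ ≤ ‖T ⟨s, hS hs⟩ - T x‖ + ‖c‖ * ‖s - (x : E)‖ :=
        (norm_sub_le _ _).trans_eq (by rw [norm_smul])
    _ < ε / (1 + ‖c‖) + ‖c‖ * (ε / (1 + ‖c‖)) :=
        add_lt_add_of_lt_of_le hTsx (by gcongr)
    _ = ε := by field_simp

end LinearPMap

section Galerkin

variable {𝕜 H : Type*} [RCLike 𝕜] [NormedAddCommGroup H] [InnerProductSpace 𝕜 H]

/-- The paper's `Pₙ* [Pₙ (L - z) Pₙ*]⁻¹ Pₙ` with `A = Pₙ L Pₙ*`; `Ring.inverse` is `0` off the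
units. -/
noncomputable def galerkinResolvent (V : Submodule 𝕜 H) [V.HasOrthogonalProjection]
    (A : V →L[𝕜] V) (c : 𝕜) : H →L[𝕜] H :=
  V.subtypeL ∘L Ring.inverse (A - c • 1) ∘L V.orthogonalProjectionOnto

variable {T : H →ₗ.[𝕜] H} {V : Submodule 𝕜 H} [V.HasOrthogonalProjection] {A : V →L[𝕜] V}

lemma orthogonalProjectionOnto_sub_smul_eq (hV : V ≤ T.domain)
    (hA : ∀ x : V, A x = V.orthogonalProjectionOnto (T ⟨x, hV x.2⟩)) (c : 𝕜) (u : V) :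
    V.orthogonalProjectionOnto (T ⟨u, hV u.2⟩ - c • (u : H)) = (A - c • 1) u := by
  simp [hA, Submodule.orthogonalProjectionOnto_mem_subspace_eq_self]

lemma galerkinResolvent_apply_sub_smul (hV : V ≤ T.domain)
    (hA : ∀ x : V, A x = V.orthogonalProjectionOnto (T ⟨x, hV x.2⟩)) {c : 𝕜}
    (hunit : IsUnit (A - c • 1)) (u : V) :
    galerkinResolvent V A c (T ⟨u, hV u.2⟩ - c • (u : H)) = u := by
  simp only [galerkinResolvent, ContinuousLinearMap.comp_apply,
    orthogonalProjectionOnto_sub_smul_eq hV hA, ← mul_apply_eq_comp,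
    Ring.inverse_mul_cancel _ hunit, one_apply_eq_self, Submodule.subtypeL_apply]

end Galerkin

lemma IsSelfAdjoint.norm_galerkinResolvent_apply_le {H : Type*} [NormedAddCommGroup H]
    [InnerProductSpace ℂ H] {V : Submodule ℂ H} [CompleteSpace V] {A : V →L[ℂ] V}
    (hA : IsSelfAdjoint A) {z : ℂ} (hz : z.im ≠ 0) (x : H) :
    ‖galerkinResolvent V A z x‖ ≤ |z.im|⁻¹ * ‖x‖ := by
  calc ‖galerkinResolvent V A z x‖
      = ‖Ring.inverse (A - z • 1) (V.orthogonalProjectionOnto x)‖ := rfl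
    _ ≤ |z.im|⁻¹ * ‖V.orthogonalProjectionOnto x‖ := hA.norm_inverse_sub_smul_one_apply_le hz _
    _ ≤ |z.im|⁻¹ * ‖x‖ := by gcongr; exact V.norm_orthogonalProjectionOnto_apply_le x

theorem hermitianDMD_stmt3_general {H : Type*} [NormedAddCommGroup H] [InnerProductSpace ℂ H]
    -- `T` is a (possibly unbounded) self-adjoint operator with dense domain
    (T : H →ₗ.[ℂ] H)
    -- `R z` is the resolvent `(T - z I)⁻¹` of `T` at a non-real point `z`
    (R : ℂ → H →L[ℂ] H)
    (hR : ∀ z : ℂ, z.im ≠ 0 →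
      (∀ x : T.domain, R z (T x - z • (x : H)) = x) ∧
      (∀ w : H, ∃ h : R z w ∈ T.domain, T ⟨R z w, h⟩ - z • R z w = w))
    -- the closed subspaces `Vₙ ⊆ D(T)`
    (V : ℕ → Submodule ℂ H) [∀ n, CompleteSpace (V n)] (hV : ∀ n, V n ≤ T.domain)
    -- `A n` is the compression `Pₙ T Pₙ*`, assumed self-adjoint on `Vₙ`
    (A : (n : ℕ) → (V n →L[ℂ] V n))
    (hA : ∀ (n : ℕ) (x : V n), A n x =
      Submodule.orthogonalProjectionOnto (V n) (T ⟨(x : H), hV n x.2⟩))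
    (hAsa : ∀ n, IsSelfAdjoint (A n))
    -- `S` is a core of `T`: the closure of the restriction of `T` to `S` is `T`
    (S : Submodule ℂ H) (hS : S ≤ T.domain)
    (hcore : ∀ (x : T.domain) (ε : ℝ), 0 < ε →
      ∃ s, ∃ hs : s ∈ S, ‖s - (x : H)‖ < ε ∧ ‖T ⟨s, hS hs⟩ - T x‖ < ε)
    -- Assumption: `T Pₙ* Pₙ u → T u` and `Pₙ* Pₙ u → u` for all `u ∈ S`
    (hTP : ∀ u, ∀ hu : u ∈ S,
      Tendsto
        (fun n => T ⟨((Submodule.orthogonalProjectionOnto (V n) u : V n) : H),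
          hV n (Submodule.orthogonalProjectionOnto (V n) u).2⟩)
        atTop (nhds (T ⟨u, hS hu⟩)))
    (hPu : ∀ u ∈ S, Tendsto (fun n => ((Submodule.orthogonalProjectionOnto (V n) u : V n) : H)) atTop (nhds u)) :
    -- conclusion: strong convergence of the resolvents
    ∀ z : ℂ, z.im ≠ 0 → ∀ v : H,
      Tendsto
        (fun n => (V n).subtypeL
          (Ring.inverse (A n - z • (1 : V n →L[ℂ] V n)) (Submodule.orthogonalProjectionOnto (V n) v)))
        atTop (nhds (R z v)) := by
  intro z hz v
  have hbound : ∀ n x, ‖galerkinResolvent (V n) (A n) z x‖ ≤ |z.im|⁻¹ * ‖x‖ :=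
    fun n => (hAsa n).norm_galerkinResolvent_apply_le hz
  have hdense : Dense (Set.range fun s : S => T ⟨s, hS s.2⟩ - z • (s : H)) := fun w => by
    obtain ⟨hw, hTw⟩ := (hR z hz).2 w
    simpa only [hTw] using T.mem_closure_range_sub_smul_of_core hS hcore z ⟨R z w, hw⟩
  show Tendsto (fun n => galerkinResolvent (V n) (A n) z v) atTop _
  refine tendsto_apply_of_dense hbound (R z).continuous hdense ?_ v
  rintro _ ⟨⟨s, hs⟩, rfl⟩
  rw [(hR z hz).1 ⟨s, hS hs⟩]
  refine tendsto_apply_of_tendsto_apply_seq hbound ((hTP s hs).sub ((hPu s hs).const_smul z)) ?_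
  simpa only [galerkinResolvent_apply_sub_smul (hV _) (hA _) ((hAsa _).isUnit_sub_smul_one hz)]
    using hPu s hs

theorem hermitianDMD_stmt3 {H : Type*} [NormedAddCommGroup H] [InnerProductSpace ℂ H]
    [CompleteSpace H]
    -- `T` is a (possibly unbounded) self-adjoint operator with dense domain
    (T : H →ₗ.[ℂ] H) (hTsa : IsSelfAdjoint T)
    -- `R z` is the resolvent `(T - z I)⁻¹` of `T` at a non-real point `z`
    (R : ℂ → H →L[ℂ] H)
    (hR : ∀ z : ℂ, z.im ≠ 0 →
      (∀ x : T.domain, R z (T x - z • (x : H)) = x) ∧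
      (∀ w : H, ∃ h : R z w ∈ T.domain, T ⟨R z w, h⟩ - z • R z w = w))
    -- the closed subspaces `Vₙ ⊆ D(T)`
    (V : ℕ → Submodule ℂ H) [∀ n, CompleteSpace (V n)] (hV : ∀ n, V n ≤ T.domain)
    -- `Pₙ* Pₙ` converges strongly to the identity
    (hP : ∀ u : H, Tendsto (fun n => ((Submodule.orthogonalProjectionOnto (V n) u : V n) : H)) atTop (nhds u))
    -- `A n` is the compression `Pₙ T Pₙ*`, assumed self-adjoint on `Vₙ`
    (A : (n : ℕ) → (V n →L[ℂ] V n))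
    (hA : ∀ (n : ℕ) (x : V n), A n x =
      Submodule.orthogonalProjectionOnto (V n) (T ⟨(x : H), hV n x.2⟩))
    (hAsa : ∀ n, IsSelfAdjoint (A n))
    -- `S` is a core of `T`: the closure of the restriction of `T` to `S` is `T`
    (S : Submodule ℂ H) (hS : S ≤ T.domain)
    (hcore : ∀ (x : T.domain) (ε : ℝ), 0 < ε →
      ∃ s, ∃ hs : s ∈ S, ‖s - (x : H)‖ < ε ∧ ‖T ⟨s, hS hs⟩ - T x‖ < ε)
    -- Assumption: `T Pₙ* Pₙ u → T u` and `Pₙ* Pₙ u → u` for all `u ∈ S`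
    (hTP : ∀ u, ∀ hu : u ∈ S,
      Tendsto
        (fun n => T ⟨((Submodule.orthogonalProjectionOnto (V n) u : V n) : H),
          hV n (Submodule.orthogonalProjectionOnto (V n) u).2⟩)
        atTop (nhds (T ⟨u, hS hu⟩)))
    (hPu : ∀ u ∈ S, Tendsto (fun n => ((Submodule.orthogonalProjectionOnto (V n) u : V n) : H)) atTop (nhds u)) :
    -- conclusion: strong convergence of the resolvents
    ∀ z : ℂ, z.im ≠ 0 → ∀ v : H,
      Tendsto
        (fun n => (V n).subtypeL
          (Ring.inverse (A n - z • (1 : V n →L[ℂ] V n)) (Submodule.orthogonalProjectionOnto (V n) v)))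
        atTop (nhds (R z v)) :=
  hermitianDMD_stmt3_general T R hR V hV A hA hAsa S hS hcore hTP hPu
end

section
/- Let M ≥ N be positive integers, let X ∈ ℂ^{M×N} satisfy X* X = I_N (orthonormal columns), and let Y ∈ ℂ^{M×N}. Then the Hermitian matrix B = (X* Y + Y* X)/2 = (X*Y + (X*Y)*)/2 minimizes ‖Y − X B‖_F over all Hermitian matrices B ∈ ℂ^{N×N}, i.e., for every B' ∈ ℂ^{N×N} with (B')* = B', one has ‖Y − X B‖_F ≤ ‖Y − X B'‖_F. -/
open Matrix

open scoped Matrix ComplexOrder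

/-- The Frobenius norm of a complex matrix. -/
noncomputable def frobeniusNorm {m n : Type*} [Fintype m] [Fintype n]
    (Z : Matrix m n ℂ) : ℝ :=
  Real.sqrt (∑ i, ∑ j, ‖Z i j‖ ^ 2)

namespace FrobAux
variable {m n : Type*} [Fintype m] [Fintype n]

noncomputable def fsq (Z : Matrix m n ℂ) : ℝ := ∑ i, ∑ j, ‖Z i j‖ ^ 2

lemma fsq_nonneg (Z : Matrix m n ℂ) : 0 ≤ fsq Z := by
  apply Finset.sum_nonneg; intros; apply Finset.sum_nonneg; intros; positivity

lemma fsq_eq_trace (Z : Matrix m n ℂ) : fsq Z = (Matrix.trace (Zᴴ * Z)).re := by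
  have hpt : ∀ z : ℂ, ‖z‖ ^ 2 = (starRingEnd ℂ z * z).re := fun z => by
    exact_mod_cast (congrArg Complex.re (Complex.conj_mul' z)).symm
  unfold fsq
  simp only [Matrix.trace, Matrix.diag, Matrix.mul_apply, Matrix.conjTranspose_apply,
    Complex.re_sum, hpt]
  exact Finset.sum_comm

lemma fsq_add (P Q : Matrix m n ℂ) :
    fsq (P + Q) = fsq P + fsq Q + 2 * (Matrix.trace (Pᴴ * Q)).re := by
  rw [fsq_eq_trace, fsq_eq_trace, fsq_eq_trace]
  have h : (P + Q)ᴴ * (P + Q) = Pᴴ*P + Qᴴ*Q + (Pᴴ*Q + Qᴴ*P) := by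
    rw [conjTranspose_add, Matrix.add_mul, Matrix.mul_add, Matrix.mul_add]; abel
  rw [h]
  have h2 : Matrix.trace (Qᴴ*P) = starRingEnd ℂ (Matrix.trace (Pᴴ*Q)) := by
    have := Matrix.trace_conjTranspose (Pᴴ*Q)
    rw [conjTranspose_mul, conjTranspose_conjTranspose] at this
    rw [this]; rfl
  simp only [Matrix.trace_add, h2, Complex.add_re, Complex.conj_re]
  ring

end FrobAux

open FrobAux

theorem hermitianDMD_stmt6 (M N : ℕ) (hMN : N ≤ M)
    (X : Matrix (Fin M) (Fin N) ℂ) (hX : Xᴴ * X = 1)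
    (Y : Matrix (Fin M) (Fin N) ℂ) :
    (((1 : ℂ) / 2) • (Xᴴ * Y + (Xᴴ * Y)ᴴ)).IsHermitian ∧
      ∀ B' : Matrix (Fin N) (Fin N) ℂ, B'.IsHermitian →
        frobeniusNorm (Y - X * (((1 : ℂ) / 2) • (Xᴴ * Y + (Xᴴ * Y)ᴴ))) ≤
          frobeniusNorm (Y - X * B') := by
  set A := Xᴴ * Y with hA
  set H := ((1 : ℂ) / 2) • (A + Aᴴ) with hH
  have hHherm : H.IsHermitian := by
    unfold Matrix.IsHermitian
    rw [hH, conjTranspose_smul, conjTranspose_add, conjTranspose_conjTranspose]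
    simp [add_comm]
  refine ⟨hHherm, ?_⟩
  intro B' hB'
  -- skew part
  set S := A - H with hS
  have hSskew : Sᴴ = -S := by
    rw [hS, conjTranspose_sub, hHherm, hH]
    module
  -- key decomposition for arbitrary B
  have key : ∀ B : Matrix (Fin N) (Fin N) ℂ,
      fsq (Y - X * B) = fsq (Y - X * A) + fsq (A - B) := by
    intro B
    have hsplit : Y - X * B = (Y - X * A) + X * (A - B) := by
      rw [Matrix.mul_sub]; abel
    have hcross : (Y - X * A)ᴴ * (X * (A - B)) = 0 := by
      have h1 : (Y - X * A)ᴴ * X = 0 := by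
        rw [conjTranspose_sub, Matrix.sub_mul, conjTranspose_mul,
          Matrix.mul_assoc, hX, Matrix.mul_one, hA, conjTranspose_mul,
          conjTranspose_conjTranspose]
        simp
      rw [← Matrix.mul_assoc, h1, Matrix.zero_mul]
    have hXiso : fsq (X * (A - B)) = fsq (A - B) := by
      rw [fsq_eq_trace, fsq_eq_trace, conjTranspose_mul, Matrix.mul_assoc,
        ← Matrix.mul_assoc Xᴴ X, hX, Matrix.one_mul]
    rw [hsplit, fsq_add, hcross, hXiso]
    simp
  -- Hermitian B: fsq (A - B) = fsq (H - B) + fsq S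
  have herm_split : ∀ B : Matrix (Fin N) (Fin N) ℂ, B.IsHermitian →
      fsq (A - B) = fsq (H - B) + fsq S := by
    intro B hB
    have hsplit : A - B = (H - B) + S := by rw [hS]; abel
    have hTherm : (H - B)ᴴ = H - B := by rw [conjTranspose_sub, hHherm, hB]
    have hre : (Matrix.trace ((H - B)ᴴ * S)).re = 0 := by
      set T := H - B
      have hz : starRingEnd ℂ (Matrix.trace (Tᴴ * S)) = -(Matrix.trace (Tᴴ * S)) := by
        have h1 : starRingEnd ℂ (Matrix.trace (Tᴴ * S)) = Matrix.trace ((Tᴴ * S)ᴴ) := by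
          rw [Matrix.trace_conjTranspose]; rfl
        rw [h1, conjTranspose_mul, conjTranspose_conjTranspose, hSskew, hTherm,
          Matrix.neg_mul, Matrix.trace_neg, Matrix.trace_mul_comm]
      have := congrArg Complex.re hz
      simp only [Complex.conj_re, Complex.neg_re] at this
      linarith
    rw [hsplit, fsq_add, hre]
    ring
  have h1 : fsq (Y - X * H) ≤ fsq (Y - X * B') := by
    rw [key H, key B', herm_split H hHherm, herm_split B' hB']
    have : fsq (H - H) = 0 := by simp [fsq]
    rw [this]
    have := fsq_nonneg (H - B')
    linarith
  show Real.sqrt (fsq (Y - X * H)) ≤ Real.sqrt (fsq (Y - X * B'))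
  exact Real.sqrt_le_sqrt h1
end

section
/- Let Ψ_X, Ψ_Y ∈ ℂ^{M×N}, let W ∈ ℝ^{M×M} be a diagonal matrix with positive diagonal entries, set G = Ψ_X* W Ψ_X and A = Ψ_X* W Ψ_Y, and assume G is invertible (equivalently, W^{1/2} Ψ_X has rank N). Then the matrix K = G^{−1}(A + A*)/2 solves the constrained least-squares problem: K minimizes ‖W^{1/2} Ψ_Y G^{−1/2} − W^{1/2} Ψ_X K' G^{−1/2}‖_F over all K' ∈ ℂ^{N×N} satisfying G K' = (K')* G. Moreover, K itself satisfies the constraint G K = K* G. -/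
open scoped Matrix ComplexOrder

/-- The positive semidefinite square root of a positive semidefinite matrix
(the definition removed from Mathlib, restated with its old meaning). -/
noncomputable def Matrix.PosSemidef.sqrt {n 𝕜 : Type*} [Fintype n] [DecidableEq n] [RCLike 𝕜]
    {A : Matrix n n 𝕜} (hA : A.PosSemidef) : Matrix n n 𝕜 :=
  hA.1.eigenvectorUnitary.1 * Matrix.diagonal ((↑) ∘ (√·) ∘ hA.1.eigenvalues) *
  (star hA.1.eigenvectorUnitary : Matrix n n 𝕜)

/-!
Put `P = W^{1/2} Ψ_X`, `Y = W^{1/2} Ψ_Y` and `R = G^{1/2}`, so that `G = P* P`. Then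
`Q = P R⁻¹` has orthonormal columns, `C = Y R⁻¹`, and `K' ↦ R K' R⁻¹` carries the matrices
satisfying `G K' = K'* G` to Hermitian matrices `T`, turning the objective into `‖C - Q T‖_F`.
Two orthogonal splittings (range of `Q` versus its complement; Hermitian versus skew-Hermitian)
give `‖C - Q T‖² = ‖C - Q Q* C‖² + ‖skew part of Q* C‖² + ‖Hermitian part of Q* C - T‖²`,
which is minimised by the Hermitian part of `Q* C`, i.e. by `R K R⁻¹`.
-/

namespace Matrix

variable {𝕜 m n : Type*} [RCLike 𝕜] [Fintype m] [Fintype n]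

def frobeniusNormSq (Z : Matrix m n 𝕜) : ℝ := RCLike.re (Zᴴ * Z).trace

theorem frobeniusNormSq_eq_sum (Z : Matrix m n 𝕜) :
    frobeniusNormSq Z = ∑ i, ∑ j, ‖Z i j‖ ^ 2 := by
  simp only [frobeniusNormSq, trace, diag, mul_apply, conjTranspose_apply, RCLike.star_def,
    RCLike.conj_mul, map_sum, ← RCLike.ofReal_pow, RCLike.ofReal_re]
  exact Finset.sum_comm

theorem frobeniusNormSq_nonneg (Z : Matrix m n 𝕜) : 0 ≤ frobeniusNormSq Z := by
  rw [frobeniusNormSq_eq_sum]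
  positivity

@[simp]
theorem frobeniusNormSq_zero : frobeniusNormSq (0 : Matrix m n 𝕜) = 0 := by
  simp [frobeniusNormSq]

theorem frobeniusNormSq_add {X Y : Matrix m n 𝕜} (h : RCLike.re (Xᴴ * Y).trace = 0) :
    frobeniusNormSq (X + Y) = frobeniusNormSq X + frobeniusNormSq Y := by
  have h' : RCLike.re (Yᴴ * X).trace = 0 := by
    rw [← conjTranspose_conjTranspose X, ← conjTranspose_mul, trace_conjTranspose,
      RCLike.star_def, RCLike.conj_re, h]
  simp only [frobeniusNormSq, conjTranspose_add, Matrix.add_mul, Matrix.mul_add, trace_add,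
    map_add, h, h']
  ring

theorem frobeniusNormSq_isometry_mul {k : Type*} [Fintype k] [DecidableEq n] {Q : Matrix m n 𝕜}
    (hQ : Qᴴ * Q = 1) (Z : Matrix n k 𝕜) : frobeniusNormSq (Q * Z) = frobeniusNormSq Z := by
  rw [frobeniusNormSq, frobeniusNormSq, conjTranspose_mul, Matrix.mul_assoc,
    ← Matrix.mul_assoc Qᴴ, hQ, Matrix.one_mul]

theorem re_trace_conjTranspose_mul_eq_zero {H S : Matrix n n 𝕜} (hH : H.IsHermitian)
    (hS : Sᴴ = -S) : RCLike.re (Hᴴ * S).trace = 0 := by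
  have hstar : star (Hᴴ * S).trace = -(Hᴴ * S).trace := by
    rw [← trace_conjTranspose, conjTranspose_mul, hS, conjTranspose_conjTranspose, hH.eq,
      Matrix.neg_mul, trace_neg, trace_mul_comm]
  have hre := congrArg RCLike.re hstar
  rw [RCLike.star_def, RCLike.conj_re, map_neg] at hre
  linarith

omit [Fintype n] in
theorem isHermitian_half_smul_add_conjTranspose (D : Matrix n n 𝕜) :
    (((1 : 𝕜) / 2) • (D + Dᴴ)).IsHermitian := by
  rw [IsHermitian, conjTranspose_smul, conjTranspose_add, conjTranspose_conjTranspose, add_comm]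
  simp

theorem frobeniusNormSq_sub_isometry_mul [DecidableEq n] {Q C : Matrix m n 𝕜}
    (hQ : Qᴴ * Q = 1) (T : Matrix n n 𝕜) :
    frobeniusNormSq (C - Q * T) =
      frobeniusNormSq (C - Q * (Qᴴ * C)) + frobeniusNormSq (Qᴴ * C - T) := by
  have hperp : Qᴴ * (C - Q * (Qᴴ * C)) = 0 := by
    rw [Matrix.mul_sub, ← Matrix.mul_assoc, hQ, Matrix.one_mul, sub_self]
  have hcross : (C - Q * (Qᴴ * C))ᴴ * (Q * (Qᴴ * C - T)) = 0 := by
    rw [← Matrix.mul_assoc, ← conjTranspose_conjTranspose Q, ← conjTranspose_mul,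
      conjTranspose_conjTranspose, hperp, conjTranspose_zero, Matrix.zero_mul]
  have hsplit : C - Q * T = (C - Q * (Qᴴ * C)) + Q * (Qᴴ * C - T) := by
    rw [Matrix.mul_sub]
    abel
  rw [hsplit, frobeniusNormSq_add (by rw [hcross, trace_zero, map_zero]),
    frobeniusNormSq_isometry_mul hQ]

theorem frobeniusNormSq_sub_of_isHermitian (D : Matrix n n 𝕜) {T : Matrix n n 𝕜}
    (hT : T.IsHermitian) :
    frobeniusNormSq (D - T) =
      frobeniusNormSq (((1 : 𝕜) / 2) • (D + Dᴴ) - T) +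
        frobeniusNormSq (((1 : 𝕜) / 2) • (D - Dᴴ)) := by
  have hskew : (((1 : 𝕜) / 2) • (D - Dᴴ))ᴴ = -(((1 : 𝕜) / 2) • (D - Dᴴ)) := by
    rw [conjTranspose_smul, conjTranspose_sub, conjTranspose_conjTranspose, ← smul_neg,
      neg_sub]
    simp
  have hsplit : D - T = (((1 : 𝕜) / 2) • (D + Dᴴ) - T) + ((1 : 𝕜) / 2) • (D - Dᴴ) := by
    module
  rw [hsplit, frobeniusNormSq_add (re_trace_conjTranspose_mul_eq_zero
    ((isHermitian_half_smul_add_conjTranspose D).sub hT) hskew)]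

theorem frobeniusNormSq_sub_isometry_mul_hermitianPart_le [DecidableEq n] {Q C : Matrix m n 𝕜}
    (hQ : Qᴴ * Q = 1) {T : Matrix n n 𝕜} (hT : T.IsHermitian) :
    frobeniusNormSq (C - Q * (((1 : 𝕜) / 2) • (Qᴴ * C + (Qᴴ * C)ᴴ))) ≤
      frobeniusNormSq (C - Q * T) := by
  set D := Qᴴ * C
  rw [frobeniusNormSq_sub_isometry_mul hQ, frobeniusNormSq_sub_isometry_mul hQ T,
    frobeniusNormSq_sub_of_isHermitian D (isHermitian_half_smul_add_conjTranspose D),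
    frobeniusNormSq_sub_of_isHermitian D hT, sub_self, frobeniusNormSq_zero]
  linarith [frobeniusNormSq_nonneg (((1 : 𝕜) / 2) • (D + Dᴴ) - T)]

variable [DecidableEq n]

theorem isHermitian_mul_mul_inv {R K : Matrix n n 𝕜} (hR : IsUnit R.det)
    (hK : Rᴴ * R * K = Kᴴ * (Rᴴ * R)) : (R * K * R⁻¹).IsHermitian := by
  have hRH : IsUnit Rᴴ.det := by rwa [det_conjTranspose, isUnit_star]
  calc (R * K * R⁻¹)ᴴ = Rᴴ⁻¹ * (Kᴴ * (Rᴴ * R)) * R⁻¹ := by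
        rw [conjTranspose_mul, conjTranspose_mul, conjTranspose_nonsing_inv, Matrix.mul_assoc,
          Matrix.mul_assoc, Matrix.mul_assoc, mul_nonsing_inv _ hR, Matrix.mul_one,
          ← Matrix.mul_assoc]
    _ = R * K * R⁻¹ := by
        rw [← hK, Matrix.mul_assoc Rᴴ, ← Matrix.mul_assoc, nonsing_inv_mul _ hRH,
          Matrix.one_mul]

/-- With `P = W^{1/2} Ψ_X` and `Y = W^{1/2} Ψ_Y` this is `G⁻¹ (A + A*) / 2`. -/
noncomputable def hermitianDMD (P Y : Matrix m n 𝕜) : Matrix n n 𝕜 :=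
  (Pᴴ * P)⁻¹ * (((1 : 𝕜) / 2) • (Pᴴ * Y + (Pᴴ * Y)ᴴ))

theorem gram_mul_hermitianDMD (P Y : Matrix m n 𝕜) (hP : IsUnit (Pᴴ * P).det) :
    Pᴴ * P * hermitianDMD P Y = (hermitianDMD P Y)ᴴ * (Pᴴ * P) := by
  rw [hermitianDMD, conjTranspose_mul (Pᴴ * P)⁻¹,
    (isHermitian_half_smul_add_conjTranspose (Pᴴ * Y)).eq, conjTranspose_nonsing_inv,
    (isHermitian_conjTranspose_mul_self P).eq, mul_nonsing_inv_cancel_left _ _ hP,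
    nonsing_inv_mul_cancel_right _ _ hP]

theorem frobeniusNormSq_sub_mul_hermitianDMD_le (P Y : Matrix m n 𝕜) {R : Matrix n n 𝕜}
    (hR : IsUnit R.det) (hRP : Rᴴ * R = Pᴴ * P) {K : Matrix n n 𝕜}
    (hK : Pᴴ * P * K = Kᴴ * (Pᴴ * P)) :
    frobeniusNormSq ((Y - P * hermitianDMD P Y) * R⁻¹) ≤
      frobeniusNormSq ((Y - P * K) * R⁻¹) := by
  set Q := P * R⁻¹
  set C := Y * R⁻¹
  have hRH : IsUnit Rᴴ.det := by rwa [det_conjTranspose, isUnit_star]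
  have hQ : Qᴴ * Q = 1 := by
    rw [conjTranspose_mul, conjTranspose_nonsing_inv, Matrix.mul_assoc, ← Matrix.mul_assoc Pᴴ,
      ← hRP, ← Matrix.mul_assoc, ← Matrix.mul_assoc, nonsing_inv_mul _ hRH, Matrix.one_mul,
      mul_nonsing_inv _ hR]
  have hobj : ∀ K : Matrix n n 𝕜, (Y - P * K) * R⁻¹ = C - Q * (R * K * R⁻¹) := by
    intro K
    rw [Matrix.sub_mul, Matrix.mul_assoc, Matrix.mul_assoc, ← Matrix.mul_assoc R⁻¹,
      ← Matrix.mul_assoc R⁻¹, nonsing_inv_mul _ hR, Matrix.one_mul]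
  have hsol : R * hermitianDMD P Y * R⁻¹ = ((1 : 𝕜) / 2) • (Qᴴ * C + (Qᴴ * C)ᴴ) := by
    rw [hermitianDMD, ← hRP, Matrix.mul_inv_rev, ← Matrix.mul_assoc, ← Matrix.mul_assoc,
      mul_nonsing_inv _ hR, Matrix.one_mul]
    simp only [Q, C, conjTranspose_mul, conjTranspose_nonsing_inv, conjTranspose_conjTranspose,
      Matrix.mul_assoc, Matrix.mul_smul, Matrix.smul_mul, Matrix.mul_add, Matrix.add_mul]
  rw [hobj, hobj, hsol]
  exact frobeniusNormSq_sub_isometry_mul_hermitianPart_le hQ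
    (isHermitian_mul_mul_inv hR (hRP ▸ hK))

section Sqrt

open scoped MatrixOrder

theorem PosSemidef.sqrt_eq_cfcSqrt {A : Matrix n n 𝕜} (hA : A.PosSemidef) :
    hA.sqrt = CFC.sqrt A := by
  rw [CFC.sqrt_eq_real_sqrt A hA.nonneg, cfcₙ_eq_cfc, hA.1.cfc_eq]
  rfl

theorem PosSemidef.conjTranspose_sqrt_mul_sqrt {A : Matrix n n 𝕜} (hA : A.PosSemidef) :
    hA.sqrtᴴ * hA.sqrt = A := by
  rw [hA.sqrt_eq_cfcSqrt, ← star_eq_conjTranspose, (CFC.sqrt_nonneg A).isSelfAdjoint.star_eq,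
    CFC.sqrt_mul_sqrt_self A hA.nonneg]

theorem PosDef.isUnit_det_sqrt {A : Matrix n n 𝕜} (hA : A.PosDef) :
    IsUnit hA.posSemidef.sqrt.det := by
  rw [← isUnit_iff_isUnit_det, hA.posSemidef.sqrt_eq_cfcSqrt,
    CFC.isUnit_sqrt_iff A hA.posSemidef.nonneg]
  exact hA.isUnit

end Sqrt

theorem conjTranspose_diagonal_sqrt_mul_self {w : n → ℝ} (hw : ∀ i, 0 ≤ w i) :
    (diagonal fun i => (√(w i) : ℂ))ᴴ * diagonal (fun i => (√(w i) : ℂ)) =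
      diagonal fun i => (w i : ℂ) := by
  rw [diagonal_conjTranspose, diagonal_mul_diagonal]
  congr 1
  funext i
  simp only [Pi.star_apply, Complex.star_def, Complex.conj_ofReal, ← Complex.ofReal_mul,
    Real.mul_self_sqrt (hw i)]

end Matrix

theorem frobeniusNorm_eq_sqrt_frobeniusNormSq {m n : Type*} [Fintype m] [Fintype n]
    (Z : Matrix m n ℂ) : frobeniusNorm Z = √(Z.frobeniusNormSq) := by
  rw [Matrix.frobeniusNormSq_eq_sum, frobeniusNorm]

theorem hermitianDMD_stmt7 (M N : ℕ)
    (ΨX ΨY : Matrix (Fin M) (Fin N) ℂ)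
    -- `W` is a diagonal matrix with positive (real) diagonal entries
    (w : Fin M → ℝ) (hw : ∀ m, 0 < w m)
    -- `G = ΨX* W ΨX` is assumed invertible; since it is automatically Hermitian positive
    -- semidefinite, this is equivalent to `G` being positive definite
    (hG : (ΨXᴴ * Matrix.diagonal (fun m => (w m : ℂ)) * ΨX).PosDef) :
    -- abbreviations
    (let W : Matrix (Fin M) (Fin M) ℂ := Matrix.diagonal fun m => (w m : ℂ);
     let Whalf : Matrix (Fin M) (Fin M) ℂ := Matrix.diagonal fun m => (Real.sqrt (w m) : ℂ);
     let G : Matrix (Fin N) (Fin N) ℂ := ΨXᴴ * W * ΨX;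
     let A : Matrix (Fin N) (Fin N) ℂ := ΨXᴴ * W * ΨY;
     let Ginvhalf : Matrix (Fin N) (Fin N) ℂ := (hG.posSemidef.sqrt)⁻¹;
     let K : Matrix (Fin N) (Fin N) ℂ := G⁻¹ * (((1 : ℂ) / 2) • (A + Aᴴ));
     -- `K` satisfies the constraint and minimizes the objective among all constrained matrices
     G * K = Kᴴ * G ∧
       ∀ K' : Matrix (Fin N) (Fin N) ℂ, G * K' = K'ᴴ * G →
         frobeniusNorm (Whalf * ΨY * Ginvhalf - Whalf * ΨX * K * Ginvhalf) ≤
           frobeniusNorm (Whalf * ΨY * Ginvhalf - Whalf * ΨX * K' * Ginvhalf)) := by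
  intro W Whalf G A Ginvhalf K
  set P := Whalf * ΨX
  have hgram : ∀ Y : Matrix (Fin M) (Fin N) ℂ, Pᴴ * (Whalf * Y) = ΨXᴴ * W * Y := fun Y => by
    rw [Matrix.conjTranspose_mul, Matrix.mul_assoc, ← Matrix.mul_assoc Whalfᴴ,
      Matrix.conjTranspose_diagonal_sqrt_mul_self fun m => (hw m).le, ← Matrix.mul_assoc]
  have hPP : Pᴴ * P = G := hgram ΨX
  have hK : K = Matrix.hermitianDMD P (Whalf * ΨY) := by
    rw [Matrix.hermitianDMD, hPP, hgram]
  have hobj : ∀ K' : Matrix (Fin N) (Fin N) ℂ,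
      Whalf * ΨY * Ginvhalf - Whalf * ΨX * K' * Ginvhalf = (Whalf * ΨY - P * K') * Ginvhalf :=
    fun K' => by rw [Matrix.sub_mul]
  refine ⟨?_, fun K' hK' => ?_⟩
  · rw [hK, ← hPP]
    exact Matrix.gram_mul_hermitianDMD P _ (hPP ▸ (Matrix.isUnit_iff_isUnit_det G).1 hG.isUnit)
  · rw [frobeniusNorm_eq_sqrt_frobeniusNormSq, frobeniusNorm_eq_sqrt_frobeniusNormSq, hobj,
      hobj, hK]
    exact Real.sqrt_le_sqrt (Matrix.frobeniusNormSq_sub_mul_hermitianDMD_le P _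
      hG.isUnit_det_sqrt (hPP ▸ hG.posSemidef.conjTranspose_sqrt_mul_sqrt) (hPP ▸ hK'))
end

section
/- The closed linear span in C₀(ℝ, ℂ) (complex-valued continuous functions on ℝ vanishing at infinity, with the supremum norm) of the family of functions {λ ↦ (λ − z)^{−1} : z ∈ ℂ \ ℝ} is all of C₀(ℝ, ℂ). Equivalently, the *-subalgebra of C₀(ℝ, ℂ) generated by these resolvent functions is dense in C₀(ℝ, ℂ), by the Stone–Weierstrass theorem for locally compact Hausdorff spaces. -/
/-!
Let `M` be the closure of the span. By the resolvent identity
`(t - z)⁻¹ (t - w)⁻¹ = (z - w)⁻¹ ((t - z)⁻¹ - (t - w)⁻¹)`, and for `z = w` by continuity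
in `z`, products of resolvents lie in `M`, so `M` is closed under multiplication; it also
contains `φ t = (t - i)⁻¹` and `star φ = (t + i)⁻¹`, hence the closed *-subalgebra generated
by `φ`. Since `φ` is injective and nowhere zero, extending it by `0` at `∞` identifies the
one-point compactification of `ℝ` with the compact set `range φ ∪ {0} ⊆ ℂ`, and the
Weierstrass theorem for `C(range φ ∪ {0}, ℂ)₀` pulls back to density of that *-subalgebra
in `C₀(ℝ, ℂ)`.
-/

open scoped ZeroAtInfty ContinuousMapZero ComplexConjugate
open Filter Topology OnePoint Set Complex

namespace ZeroAtInftyContinuousMap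

variable {X R : Type*} [TopologicalSpace X] [TopologicalSpace R] [Zero R]

def toOnePoint [R1Space X] (f : C₀(X, R)) : C(OnePoint X, R) :=
  continuousMapMk f 0 (by simpa using zero_at_infty f)

@[simp] lemma toOnePoint_infty [R1Space X] (f : C₀(X, R)) : f.toOnePoint ∞ = 0 := rfl

@[simp] lemma toOnePoint_coe [R1Space X] (f : C₀(X, R)) (x : X) : f.toOnePoint x = f x := rfl

def ofOnePoint (g : C(OnePoint X, R)) (hg : g ∞ = 0) : C₀(X, R) where
  toFun x := g x
  continuous_toFun := g.continuous.comp continuous_coe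
  zero_at_infty' := by
    have h := (g.continuous.tendsto ∞).comp tendsto_coe_infty
    rw [hg] at h
    exact h.mono_left cocompact_le_coclosedCompact

section SingleGenerator

variable {𝕜 : Type*} [RCLike 𝕜] [R1Space X] (φ : C₀(X, 𝕜))

instance : Fact ((0 : 𝕜) ∈ range φ.toOnePoint) := ⟨⟨∞, rfl⟩⟩

instance : CompactSpace (range φ.toOnePoint) :=
  isCompact_iff_compactSpace.mp (isCompact_range φ.toOnePoint.continuous)

/-- `p ↦ p ∘ φ`, with `φ` corestricted to `range φ.toOnePoint = insert 0 (range φ)`. -/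
def compRangeFactorization : C(range φ.toOnePoint, 𝕜)₀ →⋆ₙₐ[𝕜] C₀(X, 𝕜) where
  toFun p := ofOnePoint (p.toContinuousMap.comp ⟨rangeFactorization φ.toOnePoint,
    φ.toOnePoint.continuous.rangeFactorization⟩) (map_zero p)
  map_smul' _ _ := rfl
  map_zero' := rfl
  map_add' _ _ := rfl
  map_mul' _ _ := rfl
  map_star' _ := rfl

lemma compRangeFactorization_id : compRangeFactorization φ (.id _) = φ := rfl

lemma lipschitzWith_compRangeFactorization : LipschitzWith 1 (compRangeFactorization φ) := by
  refine LipschitzWith.of_dist_le_mul fun p q => ?_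
  rw [NNReal.coe_one, one_mul, ← dist_toBCF_eq_dist]
  refine (BoundedContinuousFunction.dist_le dist_nonneg).mpr fun x => ?_
  rw [← ContinuousMapZero.isometry_toContinuousMap.dist_eq]
  exact ContinuousMap.dist_apply_le_dist (⟨φ x, x, rfl⟩ : range φ.toOnePoint)

variable {φ}

lemma toOnePoint_injective (hinj : Function.Injective φ) (hne : ∀ x, φ x ≠ 0) :
    Function.Injective φ.toOnePoint := by
  intro a b hab
  induction a using OnePoint.rec <;> induction b using OnePoint.rec
  · rfl
  · exact absurd hab.symm (hne _)
  · exact absurd hab (hne _)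
  · exact congrArg _ (hinj hab)

noncomputable def onePointHomeomorphRange (hinj : Function.Injective φ)
    (hne : ∀ x, φ x ≠ 0) : OnePoint X ≃ₜ range φ.toOnePoint :=
  φ.toOnePoint.continuous.rangeFactorization.homeoOfEquivCompactToT2
    (f := .ofBijective _ ⟨rangeFactorization_injective.mpr (toOnePoint_injective hinj hne),
      rangeFactorization_surjective⟩)

lemma compRangeFactorization_surjective (hinj : Function.Injective φ) (hne : ∀ x, φ x ≠ 0) :
    Function.Surjective (compRangeFactorization φ) := by
  intro f
  let e := onePointHomeomorphRange hinj hne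
  refine ⟨⟨f.toOnePoint.comp e.symm, ?_⟩, ?_⟩
  · change f.toOnePoint (e.symm (e ∞)) = 0
    rw [e.symm_apply_apply, toOnePoint_infty]
  · ext x
    change f.toOnePoint (e.symm (e x)) = f x
    rw [e.symm_apply_apply, toOnePoint_coe]

theorem dense_adjoin_singleton_of_injective (hinj : Function.Injective φ)
    (hne : ∀ x, φ x ≠ 0) :
    Dense (NonUnitalStarAlgebra.adjoin 𝕜 {φ} : Set C₀(X, 𝕜)) := by
  have := ((compRangeFactorization_surjective hinj hne).denseRange.dense_image
    (lipschitzWith_compRangeFactorization φ).continuous (ContinuousMapZero.adjoin_id_dense _))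
  rwa [← NonUnitalStarSubalgebra.coe_map, NonUnitalStarAlgHom.map_adjoin_singleton,
    compRangeFactorization_id] at this

end SingleGenerator

end ZeroAtInftyContinuousMap

namespace Submodule

variable {R A : Type*} [CommSemiring R] [NonUnitalSemiring A] [Module R A]
  [IsScalarTower R A A] [SMulCommClass R A A] [TopologicalSpace A] [ContinuousAdd A]
  [ContinuousConstSMul R A] [ContinuousMul A] {s : Set A}

lemma mul_mem_topologicalClosure_span
    (hs : ∀ x ∈ s, ∀ y ∈ s, x * y ∈ (span R s).topologicalClosure) {a b : A}
    (ha : a ∈ (span R s).topologicalClosure) (hb : b ∈ (span R s).topologicalClosure) :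
    a * b ∈ (span R s).topologicalClosure := by
  have hspan : ∀ x ∈ span R s, ∀ y ∈ span R s, x * y ∈ (span R s).topologicalClosure := by
    intro x hx y hy
    have hxy : LinearMap.mul R A x y ∈ map₂ (LinearMap.mul R A) (span R s) (span R s) :=
      apply_mem_map₂ _ hx hy
    rw [map₂_span_span] at hxy
    exact span_le.mpr (Set.image2_subset_iff.mpr hs) hxy
  rw [← SetLike.mem_coe, ← (span R s).isClosed_topologicalClosure.closure_eq]
  exact map_mem_closure₂ continuous_mul ha hb hspan

lemma _root_.NonUnitalStarAlgebra.adjoin_singleton_subset_topologicalClosure_span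
    [StarRing R] [StarRing A] [StarModule R A]
    (hs : ∀ x ∈ s, ∀ y ∈ s, x * y ∈ (span R s).topologicalClosure) {a : A}
    (ha : a ∈ (span R s).topologicalClosure) (ha' : star a ∈ (span R s).topologicalClosure) :
    (NonUnitalStarAlgebra.adjoin R {a} : Set A) ⊆ (span R s).topologicalClosure :=
  NonUnitalAlgebra.adjoin_le (S := (span R s).topologicalClosure.toNonUnitalSubalgebra
    fun _ _ => mul_mem_topologicalClosure_span hs) <|
    Set.union_subset (Set.singleton_subset_iff.mpr ha)
      (by rw [Set.star_singleton]; exact Set.singleton_subset_iff.mpr ha')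

end Submodule

lemma Complex.ofReal_sub_ne_zero_of_im_ne_zero {z : ℂ} (hz : z.im ≠ 0) (t : ℝ) :
    (t : ℂ) - z ≠ 0 := fun h => hz (by simpa using congrArg Complex.im h)

lemma Complex.tendsto_inv_ofReal_sub_cocompact (z : ℂ) :
    Tendsto (fun t : ℝ => ((t : ℂ) - z)⁻¹) (cocompact ℝ) (𝓝 0) := by
  rw [← Metric.cobounded_eq_cocompact]
  exact tendsto_inv₀_cobounded.comp
    ((tendsto_sub_const_cobounded z).comp (RCLike.tendsto_ofReal_cobounded_cobounded ℂ))

noncomputable def resolventFn (z : ℂ) (hz : z.im ≠ 0) : C₀(ℝ, ℂ) where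
  toFun t := ((t : ℂ) - z)⁻¹
  continuous_toFun := (continuous_ofReal.sub continuous_const).inv₀
    (ofReal_sub_ne_zero_of_im_ne_zero hz)
  zero_at_infty' := tendsto_inv_ofReal_sub_cocompact z

section resolventFn

variable {z w : ℂ} (hz : z.im ≠ 0) (hw : w.im ≠ 0)

@[simp] lemma resolventFn_apply (t : ℝ) : resolventFn z hz t = ((t : ℂ) - z)⁻¹ := rfl

lemma resolventFn_injective : Function.Injective (resolventFn z hz) := fun s t hst => by
  simpa using hst

lemma resolventFn_ne_zero (t : ℝ) : resolventFn z hz t ≠ 0 :=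
  inv_ne_zero (ofReal_sub_ne_zero_of_im_ne_zero hz t)

lemma star_resolventFn :
    star (resolventFn z hz) = resolventFn (conj z) (by simpa using hz) := by
  ext t
  simp

lemma dist_resolventFn_le :
    dist (resolventFn w hw) (resolventFn z hz) ≤ ‖w - z‖ / (|w.im| * |z.im|) := by
  rw [← ZeroAtInftyContinuousMap.dist_toBCF_eq_dist]
  refine (BoundedContinuousFunction.dist_le (by positivity)).mpr fun t => ?_
  have hwt := ofReal_sub_ne_zero_of_im_ne_zero hw t
  have hzt := ofReal_sub_ne_zero_of_im_ne_zero hz t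
  have hdiff : ((t : ℂ) - w)⁻¹ - ((t : ℂ) - z)⁻¹
      = (w - z) / (((t : ℂ) - w) * ((t : ℂ) - z)) := by
    field_simp
    ring
  rw [dist_eq_norm]
  change ‖((t : ℂ) - w)⁻¹ - ((t : ℂ) - z)⁻¹‖ ≤ _
  rw [hdiff, norm_div, norm_mul]
  gcongr
  · simpa using abs_im_le_norm ((t : ℂ) - w)
  · simpa using abs_im_le_norm ((t : ℂ) - z)

lemma tendsto_resolventFn_add_ofReal :
    Tendsto (fun s : ℝ => resolventFn (z + s) (by simpa using hz)) (𝓝 0)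
      (𝓝 (resolventFn z hz)) := by
  rw [tendsto_iff_dist_tendsto_zero]
  refine squeeze_zero (g := fun s : ℝ => |s| / (z.im * z.im)) (fun _ => dist_nonneg)
    (fun s => (dist_resolventFn_le hz _).trans_eq (by simp)) ?_
  simpa using (continuous_abs.div_const (z.im * z.im)).tendsto (0 : ℝ)

lemma resolventFn_mul_resolventFn (hzw : z ≠ w) :
    resolventFn z hz * resolventFn w hw =
      (z - w)⁻¹ • (resolventFn z hz - resolventFn w hw) := by
  ext t
  have hzt := ofReal_sub_ne_zero_of_im_ne_zero hz t
  have hwt := ofReal_sub_ne_zero_of_im_ne_zero hw t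
  have hzw' := sub_ne_zero.mpr hzw
  simp only [ZeroAtInftyContinuousMap.coe_mul, ZeroAtInftyContinuousMap.coe_smul,
    ZeroAtInftyContinuousMap.coe_sub, Pi.mul_apply, Pi.smul_apply, Pi.sub_apply,
    resolventFn_apply, smul_eq_mul]
  field_simp
  ring

end resolventFn

def resolventFns : Set C₀(ℝ, ℂ) :=
  {f | ∃ z : ℂ, z.im ≠ 0 ∧ ∀ t : ℝ, f t = ((t : ℂ) - z)⁻¹}

section resolventFns

open Submodule

variable {z w : ℂ} (hz : z.im ≠ 0) (hw : w.im ≠ 0)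

lemma exists_eq_resolventFn_of_mem {f : C₀(ℝ, ℂ)} (hf : f ∈ resolventFns) :
    ∃ z hz, f = resolventFn z hz := by
  obtain ⟨z, hz, hf⟩ := hf
  exact ⟨z, hz, ZeroAtInftyContinuousMap.ext hf⟩

lemma resolventFn_mem_closure_span :
    resolventFn z hz ∈ (span ℂ resolventFns).topologicalClosure :=
  le_topologicalClosure _ (subset_span ⟨z, hz, fun _ => rfl⟩)

lemma resolventFn_mul_resolventFn_mem_closure_span :
    resolventFn z hz * resolventFn w hw ∈ (span ℂ resolventFns).topologicalClosure := by
  have h_ne : ∀ w (hw : w.im ≠ 0), z ≠ w →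
      resolventFn z hz * resolventFn w hw ∈ (span ℂ resolventFns).topologicalClosure := by
    intro w hw hzw
    rw [resolventFn_mul_resolventFn hz hw hzw]
    exact smul_mem _ _
      (sub_mem (resolventFn_mem_closure_span hz) (resolventFn_mem_closure_span hw))
  rcases eq_or_ne z w with rfl | hzw
  · -- `(t - z)⁻² = lim (t - z)⁻¹ (t - z - s)⁻¹` as the real shift `s ≠ 0` tends to `0`
    have hlim := (tendsto_resolventFn_add_ofReal hw).mono_left (nhdsWithin_le_nhds (s := {0}ᶜ))
    refine (span ℂ resolventFns).isClosed_topologicalClosure.mem_of_tendsto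
      (tendsto_const_nhds.mul hlim) ?_
    filter_upwards [self_mem_nhdsWithin] with s hs
    exact h_ne _ _ (by simpa using hs)
  · exact h_ne w hw hzw

lemma mul_mem_closure_span_resolventFns :
    ∀ f ∈ resolventFns, ∀ g ∈ resolventFns,
      f * g ∈ (span ℂ resolventFns).topologicalClosure := by
  rintro _ hf _ hg
  obtain ⟨z, hz, rfl⟩ := exists_eq_resolventFn_of_mem hf
  obtain ⟨w, hw, rfl⟩ := exists_eq_resolventFn_of_mem hg
  exact resolventFn_mul_resolventFn_mem_closure_span hz hw

end resolventFns

open ZeroAtInftyContinuousMap in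
theorem hermitianDMD_stmt10 :
    Dense (↑(Submodule.span ℂ
        {f : C₀(ℝ, ℂ) | ∃ z : ℂ, z.im ≠ 0 ∧ ∀ t : ℝ, f t = ((t : ℂ) - z)⁻¹}) :
      Set C₀(ℝ, ℂ)) := by
  have hI : I.im ≠ 0 := by simp
  have hsub := NonUnitalStarAlgebra.adjoin_singleton_subset_topologicalClosure_span
    mul_mem_closure_span_resolventFns
    (resolventFn_mem_closure_span hI)
    (by rw [star_resolventFn]; exact resolventFn_mem_closure_span _)
  rw [← dense_closure, ← Submodule.topologicalClosure_coe]
  exact (dense_adjoin_singleton_of_injective (resolventFn_injective hI)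
    (resolventFn_ne_zero hI)).mono hsub
end
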